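/- arXiv:2308.15566 — 2 statements merged into one kernel-verified Lean document; each statement's English description precedes it below -/
import Mathlib

section
/- Let K, χ, p̂, c be real numbers and let p, p_c : ℝ → ℝ be functions differentiable at λ₀ that satisfy, for all λ in a neighborhood of λ₀, the coupled implicit return-mapping relations p(λ) = p̂ − K·λ·(2·p(λ) − p_c(λ)) and p_c(λ) = c·exp(χ·λ·(2·p(λ) − p_c(λ))). If 1 + (2K + χ·p_c(λ₀))·λ₀ ≠ 0, then p′(λ₀) = −K·(2·p(λ₀) − p_c(λ₀)) / (1 + (2K + χ·p_c(λ₀))·λ₀) and p_c′(λ₀) = χ·p_c(λ₀)·(2·p(λ₀) − p_c(λ₀)) / (1 + (2K + χ·p_c(λ₀))·λ₀). -/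
/-! Differentiating both relations expresses `p'` and `p_c'` through the derivative of the
yield argument `g = 2 p - p_c`, namely `p' = -K (g + λ g')` and `p_c' = χ p_c (g + λ g')`.
Hence `g' = -(2K + χ p_c) (g + λ g')`, so `g + λ g' = g / (1 + (2K + χ p_c) λ)`. -/

open Filter

theorem HasDerivAt.const_mul_id_mul {g : ℝ → ℝ} {g' x : ℝ} (a : ℝ) (hg : HasDerivAt g g' x) :
    HasDerivAt (fun l => a * l * g l) (a * (g x + x * g')) x := by
  refine (((hasDerivAt_id x).const_mul a).mul hg).congr_deriv ?_
  simp only [id, mul_one]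
  ring

theorem return_mapping_linear_solve {K χ q g a b x : ℝ} (hden : 1 + (2 * K + χ * q) * x ≠ 0)
    (ha : a = -K * (g + x * (2 * a - b))) (hb : b = q * (χ * (g + x * (2 * a - b)))) :
    a = -K * g / (1 + (2 * K + χ * q) * x) ∧ b = χ * q * g / (1 + (2 * K + χ * q) * x) := by
  have hinc : g + x * (2 * a - b) = g / (1 + (2 * K + χ * q) * x) := by
    rw [eq_div_iff hden]
    linear_combination x * (2 * ha - hb)
  constructor
  · rw [ha, hinc, mul_div_assoc]
  · rw [hb, hinc]
    ring

theorem coupled_return_mapping_derivatives (K χ phat c : ℝ) (p p_c : ℝ → ℝ) (l₀ : ℝ)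
    (hp : DifferentiableAt ℝ p l₀) (hpc : DifferentiableAt ℝ p_c l₀)
    (h1 : ∀ᶠ l in nhds l₀, p l = phat - K * l * (2 * p l - p_c l))
    (h2 : ∀ᶠ l in nhds l₀, p_c l = c * Real.exp (χ * l * (2 * p l - p_c l)))
    (hden : 1 + (2 * K + χ * p_c l₀) * l₀ ≠ 0) :
    deriv p l₀ = -K * (2 * p l₀ - p_c l₀) / (1 + (2 * K + χ * p_c l₀) * l₀) ∧
    deriv p_c l₀ = χ * p_c l₀ * (2 * p l₀ - p_c l₀) / (1 + (2 * K + χ * p_c l₀) * l₀) := by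
  set a := deriv p l₀
  set b := deriv p_c l₀
  have hg : HasDerivAt (fun l => 2 * p l - p_c l) (2 * a - b) l₀ :=
    (hp.hasDerivAt.const_mul 2).sub hpc.hasDerivAt
  have hp' : HasDerivAt p (-K * (2 * p l₀ - p_c l₀ + l₀ * (2 * a - b))) l₀ := by
    refine (((hasDerivAt_const l₀ phat).sub (hg.const_mul_id_mul K)).congr_of_eventuallyEq
      h1).congr_deriv ?_
    ring
  have hpc' : HasDerivAt p_c
      (p_c l₀ * (χ * (2 * p l₀ - p_c l₀ + l₀ * (2 * a - b)))) l₀ := by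
    refine (((hg.const_mul_id_mul χ).exp.const_mul c).congr_of_eventuallyEq h2).congr_deriv ?_
    rw [← mul_assoc, ← h2.self_of_nhds]
  exact return_mapping_linear_solve hden (hp.hasDerivAt.unique hp') (hpc.hasDerivAt.unique hpc')
end

section
/- Let K, G, M, χ > 0 and p̂, q̂, c be real numbers, let λ₀ ≥ 0, and let p, p_c : ℝ → ℝ be differentiable at λ₀ and satisfy, for all λ near λ₀, p(λ) = p̂ − K·λ·(2·p(λ) − p_c(λ)) and p_c(λ) = c·exp(χ·λ·(2·p(λ) − p_c(λ))), with p_c(λ₀) > 0. Define q(λ) = q̂/(1 + 6·G·λ/M²) and the yield value F(λ) = q(λ)²/M² + p(λ)·(p(λ) − p_c(λ)). Then F is differentiable at λ₀ and F′(λ₀) = −K·(2·p(λ₀) − p_c(λ₀))²/(1 + (2K + χ·p_c(λ₀))·λ₀) − (2·q(λ₀)/M²)·q(λ₀)/(λ₀ + M²/(6G)) − χ·p(λ₀)·p_c(λ₀)·(2·p(λ₀) − p_c(λ₀))/(1 + (2K + χ·p_c(λ₀))·λ₀). -/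
/-!
Write `s = 2p - p_c` and `w = (λ s)'(λ₀) = s + λ₀ s'`. Differentiating the two implicit updates
gives `p' = -K w` and `p_c' = χ p_c w`, hence `s' = -(2K + χ p_c) w`, and substituting this into
`w = s + λ₀ s'` yields `w = s / (1 + (2K + χ p_c) λ₀)`. The deviatoric part is explicit:
`q = q̂ / (1 + λ / α)` with `α = M² / (6G)`, so `q' = -q / (λ + α)`.
-/

open Filter

theorem hasDerivAt_div_one_add_mul_div {x κ μ l₀ : ℝ} (hκ : κ ≠ 0) (hμ : μ ≠ 0)
    (h : 1 + κ * l₀ / μ ≠ 0) :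
    HasDerivAt (fun l => x / (1 + κ * l / μ)) (-(x / (1 + κ * l₀ / μ)) / (l₀ + μ / κ)) l₀ := by
  have hden : HasDerivAt (fun l => 1 + κ * l / μ) (κ / μ) l₀ := by
    simpa using (((hasDerivAt_id l₀).const_mul κ).div_const μ).const_add 1
  have hsum : l₀ + μ / κ ≠ 0 := by
    have key : 1 + κ * l₀ / μ = κ / μ * (l₀ + μ / κ) := by field_simp; ring
    exact right_ne_zero_of_mul (key ▸ h)
  refine ((hasDerivAt_const l₀ x).div hden h).congr_deriv ?_
  field_simp
  ring

section ReturnPath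

variable {K χ phat c l₀ a b : ℝ} {p p_c : ℝ → ℝ}

theorem hasDerivAt_mul_two_mul_sub (ha : HasDerivAt p a l₀) (hb : HasDerivAt p_c b l₀) :
    HasDerivAt (fun l => l * (2 * p l - p_c l)) (2 * p l₀ - p_c l₀ + l₀ * (2 * a - b)) l₀ := by
  refine ((hasDerivAt_id l₀).mul ((ha.const_mul 2).sub hb)).congr_deriv ?_
  simp

theorem hydrostatic_update_deriv_eq (ha : HasDerivAt p a l₀) (hb : HasDerivAt p_c b l₀)
    (h1 : ∀ᶠ l in nhds l₀, p l = phat - K * l * (2 * p l - p_c l)) :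
    a = -K * (2 * p l₀ - p_c l₀ + l₀ * (2 * a - b)) := by
  have hrhs := ((hasDerivAt_mul_two_mul_sub ha hb).const_mul K).const_sub phat
  simp only [← mul_assoc] at hrhs
  exact (ha.unique (hrhs.congr_of_eventuallyEq h1)).trans (by ring)

theorem hardening_update_deriv_eq (ha : HasDerivAt p a l₀) (hb : HasDerivAt p_c b l₀)
    (h2 : ∀ᶠ l in nhds l₀, p_c l = c * Real.exp (χ * l * (2 * p l - p_c l))) :
    b = χ * p_c l₀ * (2 * p l₀ - p_c l₀ + l₀ * (2 * a - b)) := by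
  have hrhs := (((hasDerivAt_mul_two_mul_sub ha hb).const_mul χ).exp).const_mul c
  simp only [← mul_assoc] at hrhs
  have hb' := hb.unique (hrhs.congr_of_eventuallyEq h2)
  rw [← h2.self_of_nhds] at hb'
  linear_combination hb'

theorem hasDerivAt_of_return_path (hp : DifferentiableAt ℝ p l₀)
    (hpc : DifferentiableAt ℝ p_c l₀)
    (h1 : ∀ᶠ l in nhds l₀, p l = phat - K * l * (2 * p l - p_c l))
    (h2 : ∀ᶠ l in nhds l₀, p_c l = c * Real.exp (χ * l * (2 * p l - p_c l)))
    (hD : 1 + (2 * K + χ * p_c l₀) * l₀ ≠ 0) :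
    HasDerivAt p (-K * (2 * p l₀ - p_c l₀) / (1 + (2 * K + χ * p_c l₀) * l₀)) l₀ ∧
      HasDerivAt p_c (χ * p_c l₀ * (2 * p l₀ - p_c l₀) / (1 + (2 * K + χ * p_c l₀) * l₀)) l₀ := by
  have ha := hp.hasDerivAt
  have hb := hpc.hasDerivAt
  have ea := hydrostatic_update_deriv_eq ha hb h1
  have eb := hardening_update_deriv_eq ha hb h2
  have hw : (2 * p l₀ - p_c l₀ + l₀ * (2 * deriv p l₀ - deriv p_c l₀)) =
      (2 * p l₀ - p_c l₀) / (1 + (2 * K + χ * p_c l₀) * l₀) := by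
    rw [eq_div_iff hD]
    linear_combination l₀ * (2 * ea - eb)
  rw [hw] at ea eb
  rw [mul_div_assoc, mul_div_assoc, ← ea, ← eb]
  exact ⟨ha, hb⟩

end ReturnPath

theorem yield_function_derivative_along_return_path
    (K G M χ phat qhat c : ℝ)
    (hK : 0 < K) (hG : 0 < G) (hM : 0 < M) (hχ : 0 < χ)
    (l₀ : ℝ) (hl₀ : 0 ≤ l₀) (p p_c : ℝ → ℝ)
    (hp : DifferentiableAt ℝ p l₀) (hpc : DifferentiableAt ℝ p_c l₀)
    (h1 : ∀ᶠ l in nhds l₀, p l = phat - K * l * (2 * p l - p_c l))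
    (h2 : ∀ᶠ l in nhds l₀, p_c l = c * Real.exp (χ * l * (2 * p l - p_c l)))
    (hpc0 : 0 < p_c l₀) :
    HasDerivAt
      (fun l : ℝ =>
        (qhat / (1 + 6 * G * l / M ^ 2)) ^ 2 / M ^ 2 + p l * (p l - p_c l))
      (-K * (2 * p l₀ - p_c l₀) ^ 2 / (1 + (2 * K + χ * p_c l₀) * l₀)
        - (2 * (qhat / (1 + 6 * G * l₀ / M ^ 2)) / M ^ 2)
            * (qhat / (1 + 6 * G * l₀ / M ^ 2)) / (l₀ + M ^ 2 / (6 * G))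
        - χ * p l₀ * p_c l₀ * (2 * p l₀ - p_c l₀) / (1 + (2 * K + χ * p_c l₀) * l₀))
      l₀ := by
  have hD : 0 < 1 + (2 * K + χ * p_c l₀) * l₀ := by positivity
  obtain ⟨ha, hb⟩ := hasDerivAt_of_return_path hp hpc h1 h2 hD.ne'
  have hq := hasDerivAt_div_one_add_mul_div (x := qhat) (by positivity : 6 * G ≠ 0)
    (by positivity : M ^ 2 ≠ 0) (by positivity : 1 + 6 * G * l₀ / M ^ 2 ≠ 0)
  refine (((hq.pow 2).div_const (M ^ 2)).add (ha.mul (ha.sub hb))).congr_deriv ?_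
  push_cast [Pi.sub_apply]
  ring
end
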